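/- Let (H, ψ, {M_xa}, {N_yb}) be a commuting operator strategy: H a Hilbert space, ψ ∈ H a unit vector, {M_xa}_{a∈O_A} a POVM on H for each x ∈ I_A and {N_yb}_{b∈O_B} a POVM on H for each y ∈ I_B, with [M_xa, N_yb] = 0 for all indices. Define σ_xa := √(M_xa) |ψ⟩⟨ψ| √(M_xa), and let 𝔅 be the C*-subalgebra of B(H) generated by {N_yb}_{y∈I_B, b∈O_B} and the identity. Then (H, {σ_xa}, {N_yb}) is a quantum sequential strategy that is strongly non-signaling with respect to 𝔅, and it produces the same correlation: tr(σ_xa N_yb) = ⟨ψ, M_xa N_yb ψ⟩ for all a, b, x, y. -/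

import Mathlib

open scoped ComplexInnerProductSpace ComplexOrder

universe u

/-- The trace of an operator computed along a Hilbert basis. -/
noncomputable def traceAlong {H : Type*} [NormedAddCommGroup H] [InnerProductSpace ℂ H]
    {ι : Type*} (b : HilbertBasis ι ℂ H) (T : H →L[ℂ] H) : ℂ :=
  ∑' i, ⟪(b i : H), T (b i)⟫

/-- A POVM with outcomes in a finite type `O`: a family of positive operators summing to `1`. -/
def IsPOVM {H : Type*} [NormedAddCommGroup H] [InnerProductSpace ℂ H] [CompleteSpace H]
    {O : Type*} [Fintype O] (E : O → H →L[ℂ] H) : Prop :=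
  (∀ o, (E o).IsPositive) ∧ ∑ o, E o = 1

/-!
The square root `R = √M_xa` is a continuous function of `M_xa`, so it commutes with everything
`M_xa` commutes with, in particular with the `N_yb`; being self-adjoint, it then commutes with the
whole closed star algebra they generate. For `C` commuting with `R`,
`tr(R |ψ⟩⟨ψ| R C) = ⟪ψ, R C R ψ⟫ = ⟪ψ, C M_xa ψ⟫`, and summing over the outcomes of the
POVM gives `⟪ψ, C ψ⟫`, which does not depend on `x`.
-/

open ContinuousLinearMap InnerProductSpace

theorem Commute.of_mul_self_eq {A : Type*} [CStarAlgebra A] [PartialOrder A] [StarOrderedRing A]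
    {r a c : A} (hr : 0 ≤ r) (hra : r * r = a) (h : Commute a c) : Commute r c := by
  rw [← CFC.sqrt_unique hra hr, CFC.sqrt_eq_cfc]
  exact h.cfc_nnreal _

theorem Commute.of_mem_topologicalClosure_adjoin {A : Type*} [CStarAlgebra A] {r c : A}
    (hr : IsSelfAdjoint r) {s : Set A} (hs : ∀ b ∈ s, Commute r b)
    (hc : c ∈ (StarAlgebra.adjoin ℂ s).topologicalClosure) : Commute r c := by
  have hr_mem : r ∈ StarSubalgebra.centralizer ℂ s := by
    refine (StarSubalgebra.mem_centralizer_iff ℂ).mpr fun b hb => ⟨(hs b hb).eq.symm, ?_⟩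
    simpa only [hr.star_eq] using (hs b hb).star_star.eq.symm
  exact StarSubalgebra.topologicalClosure_adjoin_le_centralizer_centralizer ℂ s hc r (.inl hr_mem)

section Trace

variable {H : Type*} [NormedAddCommGroup H] [InnerProductSpace ℂ H] {ι : Type*}
  (e : HilbertBasis ι ℂ H)

theorem traceAlong_sum {O : Type*} [Fintype O] (T : O → H →L[ℂ] H)
    (hT : ∀ o, Summable fun i => ⟪(e i : H), T o (e i)⟫) :
    traceAlong e (∑ o, T o) = ∑ o, traceAlong e (T o) := by
  simp only [traceAlong, sum_apply, inner_sum]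
  exact Summable.tsum_finsetSum fun o _ => hT o

variable [CompleteSpace H]

theorem HilbertBasis.hasSum_inner_comp_rankOne_comp (A B : H →L[ℂ] H) (x y : H) :
    HasSum (fun i => ⟪(e i : H), (A ∘L rankOne ℂ x y ∘L B) (e i)⟫) ⟪y, B (A x)⟫ := by
  rw [rankOne_comp, comp_rankOne, ← adjoint_inner_left]
  simpa [inner_smul_right] using e.hasSum_inner_mul_inner (adjoint B y) (A x)

theorem traceAlong_comp_rankOne_comp (A B : H →L[ℂ] H) (x y : H) :
    traceAlong e (A ∘L rankOne ℂ x y ∘L B) = ⟪y, B (A x)⟫ :=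
  (e.hasSum_inner_comp_rankOne_comp A B x y).tsum_eq

theorem traceAlong_conj_rankOne_comp_of_commute {r c : H →L[ℂ] H} (h : Commute r c) (ψ : H) :
    traceAlong e ((r ∘L rankOne ℂ ψ ψ ∘L r) ∘L c) = ⟪ψ, (c * (r * r)) ψ⟫ := by
  rw [comp_assoc, comp_assoc, traceAlong_comp_rankOne_comp]
  congr 1
  change (r * c * r) ψ = (c * (r * r)) ψ
  rw [h.eq, mul_assoc]

theorem traceAlong_sum_conj_rankOne_comp {O : Type*} [Fintype O] {m r : O → H →L[ℂ] H}
    (hm : ∑ o, m o = 1) (hr : ∀ o, r o * r o = m o) {c : H →L[ℂ] H}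
    (hc : ∀ o, Commute (r o) c) (ψ : H) :
    traceAlong e ((∑ o, r o ∘L rankOne ℂ ψ ψ ∘L r o) ∘L c) = ⟪ψ, c ψ⟫ := by
  have hsum_comp : (∑ o, r o ∘L rankOne ℂ ψ ψ ∘L r o) ∘L c
      = ∑ o, (r o ∘L rankOne ℂ ψ ψ ∘L r o) ∘L c :=
    Finset.sum_mul _ _ _
  rw [hsum_comp, traceAlong_sum e _ fun o => by
    simpa only [comp_assoc] using (e.hasSum_inner_comp_rankOne_comp _ _ _ _).summable]
  simp only [traceAlong_conj_rankOne_comp_of_commute e (hc _), hr, ← inner_sum, ← sum_apply,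
    ← Finset.mul_sum, hm, mul_one]

end Trace

theorem stmt15_general {H : Type u} [NormedAddCommGroup H] [InnerProductSpace ℂ H] [CompleteSpace H]
    {ι : Type*} (e : HilbertBasis ι ℂ H)
    {IA IB OA OB : Type*} [Fintype OA] [Fintype OB]
    (ψ : H) (hψ : ‖ψ‖ = 1)
    (M : IA → OA → H →L[ℂ] H) (N : IB → OB → H →L[ℂ] H)
    (hM : ∀ x, IsPOVM (M x))
    (hcomm : ∀ x a y b, Commute (M x a) (N y b))
    (R : IA → OA → H →L[ℂ] H)
    (hR_pos : ∀ x a, (R x a).IsPositive)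
    (hR_sq : ∀ x a, R x a * R x a = M x a)
    (σ : IA → OA → H →L[ℂ] H)
    (hσ_def : ∀ x a, σ x a = R x a ∘L ((innerSL ℂ ψ).smulRight ψ) ∘L R x a) :
    (∀ x a, (σ x a).IsPositive) ∧
    (∀ x a, Summable fun i => ⟪(e i : H), σ x a (e i)⟫) ∧
    (∀ x, traceAlong e (∑ a, σ x a) = 1) ∧
    (∀ x x' : IA,
      ∀ C ∈ (StarAlgebra.adjoin ℂ
          (Set.range fun w : IB × OB => N w.1 w.2)).topologicalClosure,
        traceAlong e ((∑ a, σ x a) ∘L C) = traceAlong e ((∑ a, σ x' a) ∘L C)) ∧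
    (∀ x y a b, traceAlong e (σ x a ∘L N y b) = ⟪ψ, (M x a * N y b) ψ⟫) := by
  obtain rfl : σ = fun x a => R x a ∘L rankOne ℂ ψ ψ ∘L R x a := funext₂ hσ_def
  have hRN : ∀ x a y b, Commute (R x a) (N y b) := fun x a y b =>
    (hcomm x a y b).of_mul_self_eq ((nonneg_iff_isPositive _).mpr (hR_pos x a)) (hR_sq x a)
  refine ⟨fun x a => ?_, fun x a => (e.hasSum_inner_comp_rankOne_comp _ _ _ _).summable,
    fun x => ?_, fun x x' C hC => ?_, fun x y a b => ?_⟩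
  · simpa only [(hR_pos x a).isSelfAdjoint.adjoint_eq] using
      (isPositive_rankOne_self ψ).conj_adjoint (R x a)
  · have := traceAlong_sum_conj_rankOne_comp e (hM x).2 (hR_sq x) (fun _ => Commute.one_right _) ψ
    rwa [← mul_def, mul_one, one_apply_eq_self, inner_self_eq_one_of_norm_eq_one hψ] at this
  · have hRC : ∀ x a, Commute (R x a) C := fun x a =>
      .of_mem_topologicalClosure_adjoin (hR_pos x a).isSelfAdjoint
        (by rintro _ ⟨⟨y, b⟩, rfl⟩; exact hRN x a y b) hC
    rw [traceAlong_sum_conj_rankOne_comp e (hM x).2 (hR_sq x) (hRC x),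
      traceAlong_sum_conj_rankOne_comp e (hM x').2 (hR_sq x') (hRC x')]
  · rw [traceAlong_conj_rankOne_comp_of_commute e (hRN x a y b), hR_sq, (hcomm x a y b).eq]

/-- commuting operator strategies yield strongly non-signaling sequential
strategies with the same correlation.  Given a commuting operator strategy
`(H, ψ, {M_xa}, {N_yb})`, define `σ_xa := √(M_xa) |ψ⟩⟨ψ| √(M_xa)` (here `R x a` is the
positive square root of `M x a`, and `|ψ⟩⟨ψ|` is `(innerSL ℂ ψ).smulRight ψ`), and let `𝔅` be
the closed star subalgebra of `B(H)` generated by the `N_yb`.  Then `(H, {σ_xa}, {N_yb})` is a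
quantum sequential strategy, it is strongly non-signaling with respect to `𝔅`, and
`tr(σ_xa N_yb) = ⟪ψ, M_xa N_yb ψ⟫`. -/
theorem stmt15 {H : Type u} [NormedAddCommGroup H] [InnerProductSpace ℂ H] [CompleteSpace H]
    {ι : Type*} (e : HilbertBasis ι ℂ H)
    {IA IB OA OB : Type*} [Fintype OA] [Fintype OB]
    (ψ : H) (hψ : ‖ψ‖ = 1)
    (M : IA → OA → H →L[ℂ] H) (N : IB → OB → H →L[ℂ] H)
    (hM : ∀ x, IsPOVM (M x)) (hN : ∀ y, IsPOVM (N y))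
    (hcomm : ∀ x a y b, Commute (M x a) (N y b))
    (R : IA → OA → H →L[ℂ] H)
    (hR_pos : ∀ x a, (R x a).IsPositive)
    (hR_sq : ∀ x a, R x a * R x a = M x a)
    (σ : IA → OA → H →L[ℂ] H)
    (hσ_def : ∀ x a, σ x a = R x a ∘L ((innerSL ℂ ψ).smulRight ψ) ∘L R x a) :
    (∀ x a, (σ x a).IsPositive) ∧
    (∀ x a, Summable fun i => ⟪(e i : H), σ x a (e i)⟫) ∧
    (∀ x, traceAlong e (∑ a, σ x a) = 1) ∧
    (∀ x x' : IA,
      ∀ C ∈ (StarAlgebra.adjoin ℂ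
          (Set.range fun w : IB × OB => N w.1 w.2)).topologicalClosure,
        traceAlong e ((∑ a, σ x a) ∘L C) = traceAlong e ((∑ a, σ x' a) ∘L C)) ∧
    (∀ x y a b, traceAlong e (σ x a ∘L N y b) = ⟪ψ, (M x a * N y b) ψ⟫) :=
  stmt15_general e ψ hψ M N hM hcomm R hR_pos hR_sq σ hσ_def
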